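/- arXiv:1810.13351 — 2 statements merged into one kernel-verified Lean document; each statement's English description precedes it below -/
import Mathlib

section
/- Let F : 2^{[m]} → ℝ≥0 be monotone submodular with F([m]) = Q̃, let c : [m] → ℝ>0 be item costs, and let P be the optimal value of the LP: minimize Σ_i c_i y_i over y ∈ [0,1]^m subject to Σ_{i ∉ A} F_A(i) · y_i ≥ Q̃ − 2F(A) for all A ⊆ [m], where F_A(i) = F(A ∪ {i}) − F(A). Consider the greedy procedure that starts with A = ∅ and while F(A) < Q̃/3 adds j* = argmax_j F_A(j)/c_j. Then at each iteration with current set A (satisfying F(A) < Q̃/3), the selected item j* satisfies F_A(j*)/c_{j*} ≥ (Q̃ − 2F(A))/P. -/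
theorem stmt_4 {m : ℕ} (F : Finset (Fin m) → ℝ) (c : Fin m → ℝ) (Q P : ℝ)
    (hFnn : ∀ A, 0 ≤ F A)
    (hmono : ∀ A B : Finset (Fin m), A ⊆ B → F A ≤ F B)
    (hsub : ∀ A B : Finset (Fin m), A ⊆ B → ∀ j ∉ B,
      F (insert j B) - F B ≤ F (insert j A) - F A)
    (hFuniv : F Finset.univ = Q)
    (hc : ∀ i, 0 < c i)
    (y : Fin m → ℝ) (hy0 : ∀ i, 0 ≤ y i) (hy1 : ∀ i, y i ≤ 1)
    (hfeas : ∀ A : Finset (Fin m),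
      Q - 2 * F A ≤ ∑ i ∈ Aᶜ, (F (insert i A) - F A) * y i)
    (hP : ∑ i, c i * y i = P)
    (A : Finset (Fin m)) (hA : F A < Q / 3)
    (j : Fin m)
    (hj : ∀ j' : Fin m, (F (insert j' A) - F A) / c j' ≤ (F (insert j A) - F A) / c j) :
    (Q - 2 * F A) / P ≤ (F (insert j A) - F A) / c j := by
  set r := (F (insert j A) - F A) / c j with hr
  -- r is nonnegative
  have hFA : ∀ i : Fin m, 0 ≤ F (insert i A) - F A := fun i => by
    have := hmono A (insert i A) (Finset.subset_insert i A); linarith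
  have hrnn : 0 ≤ r := by
    have := hj j
    exact le_trans (div_nonneg (hFA j) (hc j).le) this
  -- positivity of the gap
  have hgap : 0 < Q - 2 * F A := by
    have h0 : 0 ≤ F A := hFnn A
    linarith
  -- key chain
  have hchain : Q - 2 * F A ≤ r * P := by
    calc Q - 2 * F A ≤ ∑ i ∈ Aᶜ, (F (insert i A) - F A) * y i := hfeas A
      _ ≤ ∑ i ∈ Aᶜ, r * (c i * y i) := by
          apply Finset.sum_le_sum
          intro i _
          have h1 : (F (insert i A) - F A) / c i ≤ r := hj i
          have h2 : F (insert i A) - F A ≤ r * c i := by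
            rw [div_le_iff₀ (hc i)] at h1; linarith
          have := mul_le_mul_of_nonneg_right h2 (hy0 i)
          linarith [this]
      _ ≤ ∑ i, r * (c i * y i) := by
          apply Finset.sum_le_sum_of_subset_of_nonneg (Finset.subset_univ _)
          intro i _ _
          exact mul_nonneg hrnn (mul_nonneg (hc i).le (hy0 i))
      _ = r * P := by rw [← hP, Finset.mul_sum]
  have hPpos : 0 < P := by
    by_contra h
    push_neg at h
    have : r * P ≤ 0 := mul_nonpos_of_nonneg_of_nonpos hrnn h
    linarith
  rw [div_le_iff₀ hPpos]
  linarith [hchain, mul_comm r P]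
end

section
/- Let F : 2^{[m]} → ℝ≥0 be monotone submodular with F([m]) = Q̃ > 0 and costs c_i > 0. Suppose a sequence of items j_1, ..., j_k is chosen such that for each i ≤ k, with A_{<i} = {j_1,...,j_{i−1}}, we have F(A_{<i}) < Q̃/3 and F_{A_{<i}}(j_i)/c_{j_i} ≥ (Q̃ − 2F(A_{<i}))/P for some P > 0, and F(A_{<k} ∪ {j_k}) ≥ Q̃/3. Then Σ_{i=1}^k c_{j_i} ≤ 3P. -/
theorem stmt_5 {m : ℕ} (F : Finset (Fin m) → ℝ) (c : Fin m → ℝ) (Q P : ℝ)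
    (hFnn : ∀ A, 0 ≤ F A)
    (hmono : ∀ A B : Finset (Fin m), A ⊆ B → F A ≤ F B)
    (hsub : ∀ A B : Finset (Fin m), A ⊆ B → ∀ j ∉ B,
      F (insert j B) - F B ≤ F (insert j A) - F A)
    (hFuniv : F Finset.univ = Q) (hQ : 0 < Q) (hP : 0 < P)
    (hc : ∀ i, 0 < c i)
    (k : ℕ) (j : ℕ → Fin m) (A : ℕ → Finset (Fin m))
    (hA0 : A 0 = ∅) (hAs : ∀ i < k, A (i + 1) = insert (j i) (A i))
    (hlt : ∀ i < k, F (A i) < Q / 3)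
    (hratio : ∀ i < k,
      (Q - 2 * F (A i)) / P ≤ (F (insert (j i) (A i)) - F (A i)) / c (j i))
    (hend : Q / 3 ≤ F (A k)) :
    ∑ i ∈ Finset.range k, c (j i) ≤ 3 * P := by
  have key : ∀ i < k, c (j i) ≤ 3 * P / Q * (F (A (i + 1)) - F (A i)) := by
    intro i hi
    have hAi := hAs i hi
    have hf := hlt i hi
    have hr := hratio i hi
    have hc' := hc (j i)
    rw [div_le_div_iff₀ hP hc'] at hr
    rw [hAi]
    rw [div_mul_eq_mul_div, le_div_iff₀ hQ]
    nlinarith [mul_pos hc' hQ]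
  calc ∑ i ∈ Finset.range k, c (j i)
      ≤ ∑ i ∈ Finset.range k, 3 * P / Q * (F (A (i + 1)) - F (A i)) :=
        Finset.sum_le_sum fun i hi => key i (Finset.mem_range.mp hi)
    _ = 3 * P / Q * (F (A k) - F (A 0)) := by
        rw [← Finset.mul_sum, Finset.sum_range_sub (fun i => F (A i))]
    _ ≤ 3 * P := by
        have h1 : F (A k) ≤ Q := hFuniv ▸ hmono _ _ (Finset.subset_univ _)
        have h2 : 0 ≤ F (A 0) := hFnn _
        have h3 : 0 < 3 * P / Q := by positivity
        rw [div_mul_eq_mul_div, div_le_iff₀ hQ]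
        nlinarith
end
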